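/- arXiv:1201.1796 — 2 statements merged into one kernel-verified Lean document; each statement's English description precedes it below -/
import Mathlib

section
/- Let G be a regular sequential method on X. If X is G-sequentially connected, then X is generated by any G-sequentially open symmetric neighbourhood U of the identity, i.e., the subgroup of X generated by U equals X. -/
open Filter Topology Pointwise

/-- A method of sequential convergence on an additive group `X`: an additive
function defined on a subgroup of the group of `X`-valued sequences. -/
structure SeqMethod (X : Type*) [AddGroup X] where
  dom : AddSubgroup (ℕ → X)
  toFun : dom →+ X

namespace SeqMethod

variable {X : Type*} [AddGroup X]

/-- `s` G-converges to `l`. -/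
def Converges (M : SeqMethod X) (s : ℕ → X) (l : X) : Prop :=
  ∃ h : s ∈ M.dom, M.toFun ⟨s, h⟩ = l

/-- The G-sequential closure of `A`. -/
def GClosure (M : SeqMethod X) (A : Set X) : Set X :=
  {l | ∃ s : ℕ → X, (∀ n, s n ∈ A) ∧ M.Converges s l}

/-- `A` is G-sequentially closed. -/
def GClosed (M : SeqMethod X) (A : Set X) : Prop := M.GClosure A ⊆ A

/-- `A` is G-sequentially open. -/
def GOpen (M : SeqMethod X) (A : Set X) : Prop := M.GClosed Aᶜ

/-- `M` is regular: every convergent sequence G-converges to its limit. -/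
def Regular [TopologicalSpace X] (M : SeqMethod X) : Prop :=
  ∀ (s : ℕ → X) (l : X), Tendsto s atTop (𝓝 l) → M.Converges s l

/-- `A` is G-sequentially connected: `A` is nonempty and there are no nonempty
disjoint G-sequentially closed subsets of `X`, each meeting `A`, covering `A`. -/
def GConnected (M : SeqMethod X) (A : Set X) : Prop :=
  A.Nonempty ∧ ¬ ∃ U V : Set X, M.GClosed U ∧ M.GClosed V ∧
    (U ∩ A).Nonempty ∧ (V ∩ A).Nonempty ∧ Disjoint U V ∧ A ⊆ U ∪ V

/-- The G-sequentially connected component of `x` inside a subset `A`. -/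
def ComponentIn (M : SeqMethod X) (A : Set X) (x : X) : Set X :=
  ⋃₀ {C : Set X | x ∈ C ∧ C ⊆ A ∧ M.GConnected C}

/-- The G-sequentially connected component of `x` in `X`. -/
def Component (M : SeqMethod X) (x : X) : Set X :=
  ⋃₀ {C : Set X | x ∈ C ∧ M.GConnected C}

/-- `f` is G-sequentially continuous on `X`. -/
def GCont (M : SeqMethod X) (f : X → X) : Prop :=
  ∀ (s : ℕ → X) (u : X), M.Converges s u → M.Converges (fun n => f (s n)) (f u)

/-- `f` is G-sequentially continuous on the subset `A`. -/
def GContOn (M : SeqMethod X) (f : X → X) (A : Set X) : Prop :=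
  ∀ (s : ℕ → X) (u : X), (∀ n, s n ∈ A) → u ∈ A →
    M.Converges s u → M.Converges (fun n => f (s n)) (f u)

/-- `F` is G-sequentially closed in `A`. -/
def GClosedIn (M : SeqMethod X) (A F : Set X) : Prop :=
  ∃ U : Set X, M.GClosed U ∧ F = U ∩ A

/-- `V` is G-sequentially open in `A`. -/
def GOpenIn (M : SeqMethod X) (A V : Set X) : Prop :=
  V ⊆ A ∧ M.GClosedIn A (A \ V)

/-- The set of G-sequentially connected components of points of `A`. -/
def pi0 (M : SeqMethod X) (A : Set X) : Set (Set X) :=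
  {C : Set X | ∃ x ∈ A, C = M.ComponentIn A x}

/-- `X` is G-sequentially locally connected. -/
def GLocConn (M : SeqMethod X) : Prop :=
  ∀ (x : X) (U : Set X), M.GOpen U → x ∈ U →
    ∃ V : Set X, M.GConnected V ∧ (∃ O : Set X, M.GOpen O ∧ x ∈ O ∧ O ⊆ V) ∧
      x ∈ V ∧ V ⊆ U

/-- A subset `A` is G-sequentially locally connected (with the relative
G-sequentially open sets). -/
def GLocConnOn (M : SeqMethod X) (A : Set X) : Prop :=
  ∀ a ∈ A, ∀ U : Set X, M.GOpenIn A U → a ∈ U →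
    ∃ V : Set X, M.GConnected V ∧ (∃ O : Set X, M.GOpenIn A O ∧ a ∈ O ∧ O ⊆ V) ∧
      a ∈ V ∧ V ⊆ U

end SeqMethod

open SeqMethod

variable {X : Type*} [AddGroup X] [TopologicalSpace X] [IsTopologicalAddGroup X]
  [FirstCountableTopology X] [T2Space X]

/-! Translations preserve G-sequential openness because a regular method G-converges constant
sequences and is additive. Hence the subgroup generated by `U`, being the union of the translates
`h + U` for `h` in it, is G-sequentially open, and so is its complement, a union of cosets.
A nonempty G-sequentially clopen set in a G-sequentially connected group is everything. -/

namespace SeqMethod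

variable {G : Type*} [AddGroup G] {M : SeqMethod G}

theorem Converges.add {s t : ℕ → G} {l m : G} (hs : M.Converges s l) (ht : M.Converges t m) :
    M.Converges (s + t) (l + m) := by
  obtain ⟨hs, rfl⟩ := hs
  obtain ⟨ht, rfl⟩ := ht
  exact ⟨add_mem hs ht, map_add M.toFun ⟨s, hs⟩ ⟨t, ht⟩⟩

theorem Regular.converges_const [TopologicalSpace G] (hreg : M.Regular) (a : G) :
    M.Converges (fun _ => a) a :=
  hreg _ _ tendsto_const_nhds

theorem GClosed.iInter {ι : Sort*} {A : ι → Set G} (hA : ∀ i, M.GClosed (A i)) :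
    M.GClosed (⋂ i, A i) := by
  rintro l ⟨s, hs, hconv⟩
  exact Set.mem_iInter.2 fun i => hA i ⟨s, fun n => Set.mem_iInter.1 (hs n) i, hconv⟩

theorem GOpen.iUnion {ι : Sort*} {A : ι → Set G} (hA : ∀ i, M.GOpen (A i)) :
    M.GOpen (⋃ i, A i) := by
  rw [GOpen, Set.compl_iUnion]
  exact GClosed.iInter hA

theorem GClosed.preimage_add_left [TopologicalSpace G] (hreg : M.Regular) {A : Set G}
    (hA : M.GClosed A) (a : G) : M.GClosed ((a + ·) ⁻¹' A) := by
  rintro l ⟨s, hs, hconv⟩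
  exact hA ⟨fun n => a + s n, hs, (hreg.converges_const a).add hconv⟩

theorem GOpen.preimage_add_left [TopologicalSpace G] (hreg : M.Regular) {A : Set G}
    (hA : M.GOpen A) (a : G) : M.GOpen ((a + ·) ⁻¹' A) :=
  GClosed.preimage_add_left hreg hA a

theorem gOpen_addSubgroup_of_gOpen_subset [TopologicalSpace G] (hreg : M.Regular)
    {U : Set G} (hU : M.GOpen U) (hU0 : (0 : G) ∈ U) {H : AddSubgroup G} (hUH : U ⊆ H) :
    M.GOpen (H : Set G) := by
  have hH : (H : Set G) = ⋃ h : H, (-(h : G) + ·) ⁻¹' U := by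
    ext x
    simp only [Set.mem_iUnion, Set.mem_preimage, Subtype.exists, exists_prop, SetLike.mem_coe]
    refine ⟨fun hx => ⟨x, hx, by simpa using hU0⟩, ?_⟩
    rintro ⟨h, hh, hx⟩
    simpa using add_mem hh (hUH hx)
  rw [hH]
  exact GOpen.iUnion fun h => hU.preimage_add_left hreg _

theorem gClosed_addSubgroup_of_gOpen [TopologicalSpace G] (hreg : M.Regular)
    {H : AddSubgroup G} (hH : M.GOpen (H : Set G)) : M.GClosed (H : Set G) := by
  have hHc : (H : Set G)ᶜ = ⋃ x : ((H : Set G)ᶜ : Set G), (-(x : G) + ·) ⁻¹' H := by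
    ext y
    simp only [Set.mem_iUnion, Set.mem_preimage, Subtype.exists, exists_prop, Set.mem_compl_iff,
      SetLike.mem_coe]
    refine ⟨fun hy => ⟨y, hy, by simp⟩, ?_⟩
    rintro ⟨x, hx, hxy⟩ hy
    exact hx (by simpa using add_mem hy (neg_mem hxy))
  have hopen : M.GOpen (H : Set G)ᶜ := by
    rw [hHc]
    exact GOpen.iUnion fun x => hH.preimage_add_left hreg _
  rwa [GOpen, compl_compl] at hopen

theorem GConnected.eq_univ_of_gClosed_of_gOpen (hconn : M.GConnected (Set.univ : Set G))
    {A : Set G} (hc : M.GClosed A) (ho : M.GOpen A) (hne : A.Nonempty) : A = Set.univ := by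
  by_contra hA
  obtain ⟨y, hy⟩ := (Set.ne_univ_iff_exists_notMem A).1 hA
  exact hconn.2 ⟨A, Aᶜ, hc, ho, by simpa using hne, ⟨y, hy, trivial⟩, disjoint_compl_right,
    by simp⟩

end SeqMethod

theorem generated_by_gOpen_nhd_of_gConnected_general (M : SeqMethod X) (hreg : M.Regular)
    (hconn : M.GConnected (Set.univ : Set X))
    (U : Set X) (hU : U ∈ 𝓝 (0 : X)) (hopen : M.GOpen U) :
    AddSubgroup.closure U = (⊤ : AddSubgroup X) := by
  set H := AddSubgroup.closure U
  have hHopen : M.GOpen (H : Set X) :=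
    gOpen_addSubgroup_of_gOpen_subset hreg hopen (mem_of_mem_nhds hU) AddSubgroup.subset_closure
  rw [← AddSubgroup.coe_eq_univ]
  exact hconn.eq_univ_of_gClosed_of_gOpen (gClosed_addSubgroup_of_gOpen hreg hHopen) hHopen
    ⟨0, H.zero_mem⟩

theorem generated_by_gOpen_nhd_of_gConnected (M : SeqMethod X) (hreg : M.Regular)
    (hconn : M.GConnected (Set.univ : Set X))
    (U : Set X) (hU : U ∈ 𝓝 (0 : X)) (hsym : U = -U) (hopen : M.GOpen U) :
    AddSubgroup.closure U = (⊤ : AddSubgroup X) :=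
  generated_by_gOpen_nhd_of_gConnected_general M hreg hconn U hU hopen
end

section
/- X is G-sequentially locally connected if and only if for every G-sequentially open subset A of X, every G-sequentially connected component of A is G-sequentially open in X. -/
open Filter Topology Pointwise

/-!
If `X` is G-sequentially locally connected and `y` lies in the component `K` of `x` in a
G-sequentially open `A`, then `y` has a connected neighbourhood `V ⊆ A`; since `V ∪ K` is
connected and contains `x`, `V ⊆ K`, so `K` is G-sequentially open. Conversely, the component
of `x` in a G-sequentially open `U` is itself a connected neighbourhood of `x` inside `U`.
-/

namespace SeqMethod

variable {X : Type*} [AddGroup X] {M : SeqMethod X}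

theorem gOpen_iff_forall_mem_gOpen {A : Set X} :
    M.GOpen A ↔ ∀ a ∈ A, ∃ O, M.GOpen O ∧ a ∈ O ∧ O ⊆ A := by
  refine ⟨fun hA a ha => ⟨A, hA, ha, subset_rfl⟩, fun h l ⟨s, hs, hconv⟩ hlA => ?_⟩
  obtain ⟨O, hO, hlO, hOA⟩ := h l hlA
  exact hO ⟨s, fun n hsn => hs n (hOA hsn), hconv⟩ hlO

theorem gConnected_singleton (x : X) : M.GConnected {x} := by
  refine ⟨Set.singleton_nonempty x, ?_⟩
  rintro ⟨U, V, -, -, ⟨u, huU, rfl⟩, ⟨v, hvV, rfl⟩, hUV, -⟩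
  exact Set.disjoint_left.mp hUV huU hvV

theorem GConnected.subset_or_subset {C U V : Set X} (hC : M.GConnected C) (hU : M.GClosed U)
    (hV : M.GClosed V) (hUV : Disjoint U V) (hCUV : C ⊆ U ∪ V) : C ⊆ U ∨ C ⊆ V := by
  by_contra! h
  obtain ⟨c, hcC, hcU⟩ := Set.not_subset.mp h.1
  obtain ⟨d, hdC, hdV⟩ := Set.not_subset.mp h.2
  exact hC.2 ⟨U, V, hU, hV, ⟨d, (hCUV hdC).resolve_right hdV, hdC⟩,
    ⟨c, (hCUV hcC).resolve_left hcU, hcC⟩, hUV, hCUV⟩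

theorem gConnected_sUnion (x : X) (S : Set (Set X)) (hx : ∀ C ∈ S, x ∈ C)
    (hS : ∀ C ∈ S, M.GConnected C) (hne : S.Nonempty) : M.GConnected (⋃₀ S) := by
  obtain ⟨C₀, hC₀⟩ := hne
  refine ⟨⟨x, C₀, hC₀, hx C₀ hC₀⟩, ?_⟩
  rintro ⟨U, V, hU, hV, ⟨u, huU, C₁, hC₁, huC₁⟩, ⟨v, hvV, C₂, hC₂, hvC₂⟩, hUV, hcov⟩
  have hsplit : ∀ C ∈ S, C ⊆ U ∨ C ⊆ V := fun C hC =>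
    (hS C hC).subset_or_subset hU hV hUV ((Set.subset_sUnion_of_mem hC).trans hcov)
  -- every member of `S` lies on the side of the separation that contains `x`
  rcases hcov ⟨C₀, hC₀, hx C₀ hC₀⟩ with hxU | hxV
  · have hCU : C₂ ⊆ U := (hsplit C₂ hC₂).resolve_right fun h =>
      Set.disjoint_left.mp hUV hxU (h (hx C₂ hC₂))
    exact Set.disjoint_left.mp hUV (hCU hvC₂) hvV
  · have hCV : C₁ ⊆ V := (hsplit C₁ hC₁).resolve_left fun h =>
      Set.disjoint_left.mp hUV (h (hx C₁ hC₁)) hxV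
    exact Set.disjoint_left.mp hUV huU (hCV huC₁)

theorem GConnected.union {C D : Set X} {x : X} (hC : M.GConnected C) (hD : M.GConnected D)
    (hxC : x ∈ C) (hxD : x ∈ D) : M.GConnected (C ∪ D) := by
  rw [← Set.sUnion_pair]
  exact gConnected_sUnion x {C, D} (by rintro _ (rfl | rfl) <;> assumption)
    (by rintro _ (rfl | rfl) <;> assumption) (Set.insert_nonempty C {D})

theorem componentIn_subset (A : Set X) (x : X) : M.ComponentIn A x ⊆ A :=
  Set.sUnion_subset fun _ hC => hC.2.1

theorem subset_componentIn {A C : Set X} {x : X} (hC : M.GConnected C) (hxC : x ∈ C)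
    (hCA : C ⊆ A) : C ⊆ M.ComponentIn A x :=
  Set.subset_sUnion_of_mem ⟨hxC, hCA, hC⟩

theorem mem_componentIn {A : Set X} {x : X} (hx : x ∈ A) : x ∈ M.ComponentIn A x :=
  subset_componentIn (gConnected_singleton x) rfl (Set.singleton_subset_iff.mpr hx) rfl

theorem gConnected_componentIn {A : Set X} {x : X} (hx : x ∈ A) :
    M.GConnected (M.ComponentIn A x) :=
  gConnected_sUnion x _ (fun _ hC => hC.1) (fun _ hC => hC.2.2) ⟨{x}, rfl,
    Set.singleton_subset_iff.mpr hx, gConnected_singleton x⟩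

theorem GLocConn.gOpen_componentIn (hM : M.GLocConn) {A : Set X} (hA : M.GOpen A) {x : X}
    (hx : x ∈ A) : M.GOpen (M.ComponentIn A x) := by
  refine gOpen_iff_forall_mem_gOpen.mpr fun y hy => ?_
  obtain ⟨V, hV, ⟨O, hO, hyO, hOV⟩, hyV, hVA⟩ := hM y A hA (componentIn_subset A x hy)
  have hunion : V ∪ M.ComponentIn A x ⊆ M.ComponentIn A x :=
    subset_componentIn (hV.union (gConnected_componentIn hx) hyV hy)
      (Or.inr (mem_componentIn hx))
      (Set.union_subset hVA (componentIn_subset A x))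
  exact ⟨O, hO, hyO, hOV.trans (Set.subset_union_left.trans hunion)⟩

theorem gLocConn_of_gOpen_componentIn
    (h : ∀ A : Set X, M.GOpen A → ∀ x ∈ A, M.GOpen (M.ComponentIn A x)) : M.GLocConn :=
  fun x U hU hx => ⟨M.ComponentIn U x, gConnected_componentIn hx,
    ⟨_, h U hU x hx, mem_componentIn hx, subset_rfl⟩, mem_componentIn hx,
    componentIn_subset U x⟩

end SeqMethod

open SeqMethod

variable {X : Type*} [AddGroup X] [TopologicalSpace X] [IsTopologicalAddGroup X]
  [FirstCountableTopology X] [T2Space X]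

theorem gLocConn_iff_components_of_gOpen_gOpen (M : SeqMethod X) :
    M.GLocConn ↔
      ∀ A : Set X, M.GOpen A → ∀ x ∈ A, M.GOpen (M.ComponentIn A x) :=
  ⟨fun hM _ hA _ hx => hM.gOpen_componentIn hA hx, gLocConn_of_gOpen_componentIn⟩
end
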